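/- Let A be of C₀-class and z, z' ∈ ℂ. Then on D_fin, for every n ≥ 0, the recursion formulas V_{n+1}(A;z,z') = (−i) ∫_{z'}^z dζ A(ζ) Vₙ(A;ζ,z') and V_{n+1}(A;z,z') = (−i) ∫_{z'}^z dζ Vₙ(A;z,ζ) A(ζ) hold, where the integrals are line integrals of analytic vector-valued functions depending only on the endpoints. -/

import Mathlib

open MeasureTheory Complex Filter Set

noncomputable section

/-! ## Abstract setup

`FreeData 𝓗` records the spectral data of a non-negative self-adjoint operator `H₀` on a
complex Hilbert space `𝓗`: the spectral subspaces `V E = Ran E_{H₀}([0,E])`, (a linear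
extension of) the complex one-parameter group `W z = e^{izH₀}` and (a linear extension of)
`H₀` itself, together with their characterizing properties on the dense subspace
`D_fin = ⋃_{E ≥ 0} V E` of entire analytic vectors. -/

structure FreeData (𝓗 : Type*) [NormedAddCommGroup 𝓗] [InnerProductSpace ℂ 𝓗]
    [CompleteSpace 𝓗] where
  V : ℝ → Submodule ℂ 𝓗
  V_mono : Monotone V
  V_closed : ∀ E, IsClosed (V E : Set 𝓗)
  V_neg : ∀ E < (0:ℝ), V E = ⊥
  V_dense : Dense (⋃ E : ℝ, (V E : Set 𝓗))
  /-- (a linear extension of) the operator `e^{izH₀}`; only its action on `D_fin` matters -/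
  W : ℂ → 𝓗 →ₗ[ℂ] 𝓗
  /-- (a linear extension of) the operator `H₀`; only its action on `D_fin` matters -/
  H0 : 𝓗 →ₗ[ℂ] 𝓗
  W_zero : ∀ x, W 0 x = x
  W_mem : ∀ (z : ℂ) (E : ℝ), ∀ x ∈ V E, W z x ∈ V E
  W_add : ∀ (z w : ℂ) (E : ℝ), ∀ x ∈ V E, W z (W w x) = W (z + w) x
  W_norm : ∀ (z : ℂ) (E : ℝ), 0 ≤ E → ∀ x ∈ V E, ‖W z x‖ ≤ Real.exp (|z.im| * E) * ‖x‖
  W_inner_real : ∀ (t : ℝ) (E : ℝ), ∀ x ∈ V E, ∀ y ∈ V E,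
    (inner ℂ (W (t:ℂ) x) (W (t:ℂ) y) : ℂ) = inner ℂ x y
  H0_mem : ∀ E, ∀ x ∈ V E, H0 x ∈ V E
  H0_norm : ∀ E, 0 ≤ E → ∀ x ∈ V E, ‖H0 x‖ ≤ E * ‖x‖
  H0_symm : ∀ E, ∀ x ∈ V E, ∀ y ∈ V E, (inner ℂ (H0 x) y : ℂ) = inner ℂ x (H0 y)
  H0_nonneg : ∀ E, ∀ x ∈ V E, 0 ≤ (inner ℂ x (H0 x) : ℂ).re
  W_deriv : ∀ E, ∀ x ∈ V E, ∀ z : ℂ, HasDerivAt (fun w => W w x) (Complex.I • H0 (W z x)) z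

namespace FreeData

variable {𝓗 : Type*} [NormedAddCommGroup 𝓗] [InnerProductSpace ℂ 𝓗] [CompleteSpace 𝓗]

/-- `D_fin = ⋃_{E ≥ 0} Ran E_{H₀}([0,E])`. -/
def Dfin (F : FreeData 𝓗) : Set 𝓗 := ⋃ E ∈ Set.Ici (0:ℝ), (F.V E : Set 𝓗)

end FreeData

/-- A `C₀`-class operator relative to the free Hamiltonian data `F`:
`op` is (a linear extension of) the operator `A` with domain `dom`, and `adj` is
(a linear extension of) its adjoint `A*` with domain `domAdj`.  Conditions (I)–(III) of
the definition of the `C₀`-class are recorded: both `A` and `A*` are densely defined and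
closed, both are `H₀^{1/2}`-bounded (expressed through the spectral subspaces, with
`C = ‖A(H₀+1)^{-1/2}‖`), and both map `V E` into `V (E + b)`. -/
structure C0 {𝓗 : Type*} [NormedAddCommGroup 𝓗] [InnerProductSpace ℂ 𝓗] [CompleteSpace 𝓗]
    (F : FreeData 𝓗) where
  op : 𝓗 →ₗ[ℂ] 𝓗
  adj : 𝓗 →ₗ[ℂ] 𝓗
  dom : Submodule ℂ 𝓗
  domAdj : Submodule ℂ 𝓗
  dom_dense : Dense (dom : Set 𝓗)
  domAdj_dense : Dense (domAdj : Set 𝓗)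
  isClosed : IsClosed {p : 𝓗 × 𝓗 | p.1 ∈ dom ∧ p.2 = op p.1}
  isClosedAdj : IsClosed {p : 𝓗 × 𝓗 | p.1 ∈ domAdj ∧ p.2 = adj p.1}
  adjoint_spec : ∀ x ∈ dom, ∀ y ∈ domAdj, (inner ℂ (adj y) x : ℂ) = inner ℂ y (op x)
  Dfin_sub_dom : F.Dfin ⊆ dom
  Dfin_sub_domAdj : F.Dfin ⊆ domAdj
  C : ℝ
  C_nonneg : 0 ≤ C
  norm_bound : ∀ E, 0 ≤ E → ∀ x ∈ F.V E, ‖op x‖ ≤ C * Real.sqrt (E + 1) * ‖x‖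
  norm_boundAdj : ∀ E, 0 ≤ E → ∀ x ∈ F.V E, ‖adj x‖ ≤ C * Real.sqrt (E + 1) * ‖x‖
  b : ℝ
  b_nonneg : 0 ≤ b
  map_V : ∀ E, 0 ≤ E → ∀ x ∈ F.V E, op x ∈ F.V (E + b)
  map_VAdj : ∀ E, 0 ≤ E → ∀ x ∈ F.V E, adj x ∈ F.V (E + b)

namespace C0

variable {𝓗 : Type*} [NormedAddCommGroup 𝓗] [InnerProductSpace ℂ 𝓗] [CompleteSpace 𝓗]
variable {F : FreeData 𝓗}

/-- `A(z) = e^{izH₀} A e^{-izH₀}` (as a linear extension; only its values on `D_fin`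
matter). -/
def Az (A : C0 F) (z : ℂ) : 𝓗 →ₗ[ℂ] 𝓗 := F.W z ∘ₗ A.op ∘ₗ F.W (-z)

/-- `A*(z) = e^{izH₀} A* e^{-izH₀}`. -/
def AzStar (A : C0 F) (z : ℂ) : 𝓗 →ₗ[ℂ] 𝓗 := F.W z ∘ₗ A.adj ∘ₗ F.W (-z)

/-- `T(ζ,ζ') = e^{iζH₀} T e^{iζ'H₀}`. -/
def pair (A : C0 F) (ζ ζ' : ℂ) : 𝓗 → 𝓗 := fun x => F.W ζ (A.op (F.W ζ' x))

end C0

/-- The complex line integral `∫_{z'}^{z} f(ζ) dζ` (along the straight segment; for the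
analytic integrands appearing below it only depends on the endpoints). -/
def lineIntegral {𝓗 : Type*} [NormedAddCommGroup 𝓗] [NormedSpace ℂ 𝓗]
    (f : ℂ → 𝓗) (z' z : ℂ) : 𝓗 :=
  (z - z') • ∫ t in (0:ℝ)..1, f (z' + t • (z - z'))

/-- The iterated integrals
`Vₙ(Φ;z,z') = (-i)ⁿ ∫_{z'}^z dζ₁ ∫_{z'}^{ζ₁} dζ₂ ⋯ ∫_{z'}^{ζ_{n-1}} dζₙ Φ(ζ₁)⋯Φ(ζₙ)`,
defined through the recursion `V_{n+1}(z,z') = (-i) ∫_{z'}^z dζ Φ(ζ) Vₙ(ζ,z')`. -/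
def Vseq {𝓗 : Type*} [NormedAddCommGroup 𝓗] [NormedSpace ℂ 𝓗]
    (Φ : ℂ → 𝓗 → 𝓗) : ℕ → ℂ → ℂ → 𝓗 → 𝓗
  | 0 => fun _ _ x => x
  | n + 1 => fun z z' x =>
      (-Complex.I) • lineIntegral (fun ζ => Φ ζ (Vseq Φ n ζ z' x)) z' z

namespace C0

variable {𝓗 : Type*} [NormedAddCommGroup 𝓗] [InnerProductSpace ℂ 𝓗] [CompleteSpace 𝓗]
variable {F : FreeData 𝓗}

/-- `Vₙ(A;z,z')`. -/
def Vn (A : C0 F) : ℕ → ℂ → ℂ → 𝓗 → 𝓗 := Vseq (fun ζ x => A.Az ζ x)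

/-- `Vₙ(A*;z,z')`. -/
def VnStar (A : C0 F) : ℕ → ℂ → ℂ → 𝓗 → 𝓗 := Vseq (fun ζ x => A.AzStar ζ x)

/-- `U(A;z,z') = Σₙ Vₙ(A;z,z')` on `D_fin`. -/
def U (A : C0 F) (z z' : ℂ) : 𝓗 → 𝓗 := fun x => ∑' n : ℕ, A.Vn n z z' x

/-- `U(A*;z,z') = Σₙ Vₙ(A*;z,z')` on `D_fin`. -/
def Ustar (A : C0 F) (z z' : ℂ) : 𝓗 → 𝓗 := fun x => ∑' n : ℕ, A.VnStar n z z' x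

end C0

/-- The closure of the graph of (the restriction to `D` of) the map `f`;
`(x, y) ∈ graphClos D f` says that `y` is a value at `x` of the closure of `f ↾ D`. -/
def graphClos {𝓗 : Type*} [NormedAddCommGroup 𝓗]
    (D : Set 𝓗) (f : 𝓗 → 𝓗) : Set (𝓗 × 𝓗) :=
  closure {p : 𝓗 × 𝓗 | p.1 ∈ D ∧ p.2 = f p.1}

/-!
Along the segment `ζ = z' + t (z - z')` every `Vₙ(A; ζ, ζ')` with both arguments on the segment
is a real iterated integral over a simplex. The first recursion formula is the definition; the
second follows by induction on `n`, each step exchanging the two outermost integrations by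
Fubini's theorem on a triangle. The operators `A(ζ)` are unbounded, but on `D_fin` they raise the
spectral level `V (E + k b)` to `V (E + (k + 1) b)` and are jointly continuous in `(ζ, Ψ)` there,
which is all that is needed to commute them with the integrals.
-/

open AffineMap Topology

section Triangle

variable {G : Type*} [NormedAddCommGroup G] [NormedSpace ℝ G]

theorem integral_integral_triangle_swap_of_le {f : ℝ → ℝ → G}
    (hf : Continuous (Function.uncurry f)) {a b : ℝ} (hab : a ≤ b) :
    (∫ u in a..b, ∫ v in a..u, f u v) = ∫ u in a..b, ∫ v in u..b, f v u := by
  set μ : Measure ℝ := volume.restrict (Ioc a b)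
  set g : ℝ × ℝ → G := {p : ℝ × ℝ | p.2 ≤ p.1}.indicator (Function.uncurry f)
  have hint : Integrable g (μ.prod μ) := by
    obtain ⟨M, hM⟩ : ∃ M, ∀ p ∈ Icc a b ×ˢ Icc a b, ‖Function.uncurry f p‖ ≤ M :=
      (isCompact_Icc.prod isCompact_Icc).exists_bound_of_continuousOn hf.continuousOn
    have : IsFiniteMeasure μ := isFiniteMeasure_restrict.mpr measure_Ioc_lt_top.ne
    refine Integrable.mono' (integrable_const M)
      (hf.aestronglyMeasurable.indicator
        (isClosed_le continuous_snd continuous_fst).measurableSet) ?_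
    have hsquare : ∀ᵐ p ∂(μ.prod μ), p ∈ Ioc a b ×ˢ Ioc a b := by
      rw [Measure.prod_restrict]
      exact ae_restrict_mem (measurableSet_Ioc.prod measurableSet_Ioc)
    filter_upwards [hsquare] with p hp
    exact (norm_indicator_le_norm_self _ _).trans
      (hM p ⟨Ioc_subset_Icc_self hp.1, Ioc_subset_Icc_self hp.2⟩)
  have lower : ∀ u ∈ Ioc a b, (∫ v in a..u, f u v) = ∫ v, g (u, v) ∂μ := by
    intro u hu
    have hg : (fun v => g (u, v)) = (Iic u).indicator (f u) := by
      ext v; by_cases h : v ≤ u <;> simp [g, h]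
    rw [hg, setIntegral_indicator measurableSet_Iic, Ioc_inter_Iic, min_eq_right hu.2,
      intervalIntegral.integral_of_le hu.1.le]
  have upper : ∀ v ∈ Ioc a b, (∫ u, g (u, v) ∂μ) = ∫ u in v..b, f u v := by
    intro v hv
    have hg : (fun u => g (u, v)) = (Ici v).indicator (fun u => f u v) := by
      ext u; by_cases h : v ≤ u <;> simp [g, h]
    have hset : Ioc a b ∩ Ici v = Icc v b := by
      ext u
      simp only [mem_inter_iff, mem_Ioc, mem_Ici, mem_Icc]
      exact ⟨fun h => ⟨h.2, h.1.2⟩, fun h => ⟨⟨hv.1.trans_le h.1, h.2⟩, h.1⟩⟩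
    rw [hg, setIntegral_indicator measurableSet_Ici, hset, integral_Icc_eq_integral_Ioc,
      intervalIntegral.integral_of_le hv.2]
  calc (∫ u in a..b, ∫ v in a..u, f u v)
      = ∫ u, ∫ v, g (u, v) ∂μ ∂μ := by
        rw [intervalIntegral.integral_of_le hab]
        exact setIntegral_congr_fun measurableSet_Ioc lower
    _ = ∫ v, ∫ u, g (u, v) ∂μ ∂μ := integral_integral_swap (f := fun u v => g (u, v)) hint
    _ = ∫ u in a..b, ∫ v in u..b, f v u := by
        rw [intervalIntegral.integral_of_le hab]
        exact setIntegral_congr_fun measurableSet_Ioc upper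

theorem integral_integral_triangle_swap {f : ℝ → ℝ → G}
    (hf : Continuous (Function.uncurry f)) (a b : ℝ) :
    (∫ u in a..b, ∫ v in a..u, f u v) = ∫ u in a..b, ∫ v in u..b, f v u := by
  rcases le_total a b with hab | hba
  · exact integral_integral_triangle_swap_of_le hf hab
  · have hreverse := integral_integral_triangle_swap_of_le (f := fun u v => f v u)
      (hf.comp continuous_swap) hba
    simp only [intervalIntegral.integral_symm _ a, intervalIntegral.integral_symm b,
      intervalIntegral.integral_neg, neg_neg]
    exact hreverse.symm

theorem continuous_intervalIntegral_of_continuous_uncurry {X : Type*} [TopologicalSpace X]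
    {f : X → ℝ → G} (hf : Continuous (Function.uncurry f)) {a b : X → ℝ}
    (ha : Continuous a) (hb : Continuous b) :
    Continuous fun x => ∫ t in a x..b x, f x t := by
  have hsplit : (fun x => ∫ t in a x..b x, f x t) =
      fun x => (∫ t in (0 : ℝ)..b x, f x t) - ∫ t in (0 : ℝ)..a x, f x t := by
    ext x
    have hfx : Continuous (f x) := hf.comp (Continuous.prodMk_right x)
    exact (intervalIntegral.integral_interval_sub_left
      (hfx.intervalIntegrable _ _) (hfx.intervalIntegrable _ _)).symm
  rw [hsplit]
  exact (intervalIntegral.continuous_parametric_intervalIntegral_of_continuous hf hb).sub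
    (intervalIntegral.continuous_parametric_intervalIntegral_of_continuous hf ha)

end Triangle

section ClosedSubmodule

variable {𝓗 : Type*} [NormedAddCommGroup 𝓗] [NormedSpace ℂ 𝓗] [CompleteSpace 𝓗]
  {S : Submodule ℂ 𝓗} {f : ℝ → 𝓗}

theorem intervalIntegral_mem_of_isClosed (hS : IsClosed (S : Set 𝓗)) (hfS : ∀ t, f t ∈ S)
    (a b : ℝ) : (∫ t in a..b, f t) ∈ S := by
  have := hS.completeSpace_coe
  have h : (∫ t in a..b, f t) = S.subtypeₗᵢ (∫ t in a..b, (⟨f t, hfS t⟩ : S)) :=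
    S.subtypeₗᵢ.intervalIntegral_comp_comm fun t => (⟨f t, hfS t⟩ : S)
  rw [h]
  exact Submodule.coe_mem _

theorem LinearMap.map_intervalIntegral_of_mem (T : 𝓗 →ₗ[ℂ] 𝓗) (hS : IsClosed (S : Set 𝓗))
    (hT : Continuous fun x : S => T x) (hf : Continuous f) (hfS : ∀ t, f t ∈ S) (a b : ℝ) :
    T (∫ t in a..b, f t) = ∫ t in a..b, T (f t) := by
  have := hS.completeSpace_coe
  let T' : S →L[ℂ] 𝓗 := ⟨T ∘ₗ S.subtype, hT⟩
  have h : (∫ t in a..b, f t) = S.subtypeₗᵢ (∫ t in a..b, (⟨f t, hfS t⟩ : S)) :=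
    S.subtypeₗᵢ.intervalIntegral_comp_comm fun t => (⟨f t, hfS t⟩ : S)
  rw [h]
  exact (T'.intervalIntegral_comp_comm ((hf.subtype_mk hfS).intervalIntegrable a b)).symm

end ClosedSubmodule

theorem lineIntegral_lineMap {𝓗 : Type*} [NormedAddCommGroup 𝓗] [NormedSpace ℂ 𝓗]
    (f : ℂ → 𝓗) (z' z : ℂ) (s t : ℝ) :
    lineIntegral f (lineMap z' z s) (lineMap z' z t) =
      (z - z') • ∫ u in s..t, f (lineMap z' z u) := by
  have hpoint : ∀ r : ℝ, lineMap z' z s + r • (lineMap z' z t - lineMap z' z s) =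
      lineMap z' z ((t - s) * r + s) := by
    intro r
    simp only [lineMap_apply_module', Complex.real_smul]
    push_cast
    ring
  have hlength : lineMap z' z t - lineMap z' z s = (t - s : ℝ) • (z - z') := by
    simp only [lineMap_apply_module', Complex.real_smul]
    push_cast
    ring
  simp only [lineIntegral, hpoint]
  rw [hlength, smul_assoc, smul_comm,
    intervalIntegral.smul_integral_comp_mul_add (fun u => f (lineMap z' z u))]
  simp

section Recursion

variable {𝓗 : Type*} [NormedAddCommGroup 𝓗] [NormedSpace ℂ 𝓗]
  {Φ : ℂ → 𝓗 →ₗ[ℂ] 𝓗} {S : ℕ → Submodule ℂ 𝓗}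

/-- The properties of `A(ζ)` on the spectral subspaces `S k = V (E + k b)` that the recursion
formulas rely on. -/
structure IsLevelRaising (Φ : ℂ → 𝓗 →ₗ[ℂ] 𝓗) (S : ℕ → Submodule ℂ 𝓗) : Prop where
  isClosed : ∀ k, IsClosed (S k : Set 𝓗)
  map_mem : ∀ k ζ, ∀ x ∈ S k, Φ ζ x ∈ S (k + 1)
  continuous : ∀ k, Continuous fun p : ℂ × S k => Φ p.1 p.2

theorem Vseq_succ_lineMap (Φ : ℂ → 𝓗 → 𝓗) (z' z : ℂ) (n : ℕ) (s t : ℝ) (x : 𝓗) :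
    Vseq Φ (n + 1) (lineMap z' z t) (lineMap z' z s) x =
      (-Complex.I) • (z - z') •
        ∫ u in s..t, Φ (lineMap z' z u) (Vseq Φ n (lineMap z' z u) (lineMap z' z s) x) :=
  congrArg ((-Complex.I) • ·) (lineIntegral_lineMap _ z' z s t)

namespace IsLevelRaising

theorem continuous_comp (hΦ : IsLevelRaising Φ S) {X : Type*} [TopologicalSpace X] {k : ℕ}
    {ζ : X → ℂ} {h : X → 𝓗} (hζ : Continuous ζ) (hh : Continuous h) (hhS : ∀ x, h x ∈ S k) :
    Continuous fun x => Φ (ζ x) (h x) :=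
  (hΦ.continuous k).comp (hζ.prodMk (hh.subtype_mk hhS))

theorem map_intervalIntegral [CompleteSpace 𝓗] (hΦ : IsLevelRaising Φ S) {k : ℕ} (ζ : ℂ)
    {f : ℝ → 𝓗} (hf : Continuous f) (hfS : ∀ t, f t ∈ S k) (a b : ℝ) :
    Φ ζ (∫ t in a..b, f t) = ∫ t in a..b, Φ ζ (f t) :=
  (Φ ζ).map_intervalIntegral_of_mem (hΦ.isClosed k)
    (hΦ.continuous_comp continuous_const continuous_subtype_val Subtype.property) hf hfS a b

theorem Vseq_lineMap_mem_and_continuous [CompleteSpace 𝓗] (hΦ : IsLevelRaising Φ S)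
    (z' z : ℂ) (k n : ℕ) :
    (∀ a b : ℝ, ∀ x ∈ S k,
      Vseq (fun ζ x => Φ ζ x) n (lineMap z' z a) (lineMap z' z b) x ∈ S (k + n)) ∧
    Continuous fun p : ℝ × ℝ × S k =>
      Vseq (fun ζ x => Φ ζ x) n (lineMap z' z p.1) (lineMap z' z p.2.1) p.2.2 := by
  induction n with
  | zero => exact ⟨fun _ _ _ hx => hx, continuous_subtype_val.comp continuous_snd.snd⟩
  | succ n ih =>
    obtain ⟨ih_mem, ih_cont⟩ := ih
    have hcont : Continuous fun q : ℝ × ℝ × S k => Φ (lineMap z' z q.1)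
        (Vseq (fun ζ x => Φ ζ x) n (lineMap z' z q.1) (lineMap z' z q.2.1) q.2.2) :=
      hΦ.continuous_comp (lineMap_continuous.comp continuous_fst) ih_cont
        fun q => ih_mem _ _ _ q.2.2.2
    refine ⟨fun a b x hx => ?_, ?_⟩
    · rw [Vseq_succ_lineMap]
      refine Submodule.smul_mem _ _ (Submodule.smul_mem _ _
        (intervalIntegral_mem_of_isClosed (hΦ.isClosed _) (fun u => ?_) _ _))
      exact hΦ.map_mem _ _ _ (ih_mem _ _ _ hx)
    · simp only [Vseq_succ_lineMap]
      refine ((continuous_intervalIntegral_of_continuous_uncurry ?_ continuous_snd.fst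
        continuous_fst).const_smul _).const_smul _
      exact hcont.comp (continuous_snd.prodMk continuous_fst.snd)

theorem integral_Vseq_lineMap_comm [CompleteSpace 𝓗] (hΦ : IsLevelRaising Φ S) (z' z : ℂ)
    {k : ℕ} {x : 𝓗} (hx : x ∈ S k) (n : ℕ) (s t : ℝ) :
    (∫ u in s..t, Φ (lineMap z' z u)
        (Vseq (fun ζ y => Φ ζ y) n (lineMap z' z u) (lineMap z' z s) x)) =
      ∫ u in s..t, Vseq (fun ζ y => Φ ζ y) n (lineMap z' z t) (lineMap z' z u)
        (Φ (lineMap z' z u) x) := by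
  induction n generalizing s t with
  | zero => rfl
  | succ n ih =>
    obtain ⟨hmem, hcont⟩ := hΦ.Vseq_lineMap_mem_and_continuous z' z (k + 1) n
    have hΦx : ∀ v : ℝ, Φ (lineMap z' z v) x ∈ S (k + 1) := fun v => hΦ.map_mem _ _ _ hx
    have hP : Continuous fun p : ℝ × ℝ => Vseq (fun ζ y => Φ ζ y) n
        (lineMap z' z p.1) (lineMap z' z p.2) (Φ (lineMap z' z p.2) x) :=
      hcont.comp (continuous_fst.prodMk (continuous_snd.prodMk
        ((hΦ.continuous_comp (lineMap_continuous.comp continuous_snd) continuous_const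
          fun _ => hx).subtype_mk fun p => hΦx p.2)))
    have hf : Continuous (Function.uncurry fun u v => Φ (lineMap z' z u)
        (Vseq (fun ζ y => Φ ζ y) n (lineMap z' z u) (lineMap z' z v)
          (Φ (lineMap z' z v) x))) :=
      hΦ.continuous_comp (lineMap_continuous.comp continuous_fst) hP
        fun p => hmem _ _ _ (hΦx p.2)
    calc (∫ u in s..t, Φ (lineMap z' z u)
          (Vseq (fun ζ y => Φ ζ y) (n + 1) (lineMap z' z u) (lineMap z' z s) x))
        = ∫ u in s..t, (-Complex.I) • (z - z') • ∫ v in s..u, Φ (lineMap z' z u)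
            (Vseq (fun ζ y => Φ ζ y) n (lineMap z' z u) (lineMap z' z v)
              (Φ (lineMap z' z v) x)) := by
          refine intervalIntegral.integral_congr fun u _ => ?_
          rw [Vseq_succ_lineMap, ih, map_smul, map_smul]
          congr 2
          exact hΦ.map_intervalIntegral _ (hP.comp (Continuous.prodMk_right u))
            (fun v => hmem _ _ _ (hΦx v)) _ _
      _ = (-Complex.I) • (z - z') • ∫ u in s..t, ∫ v in u..t, Φ (lineMap z' z v)
            (Vseq (fun ζ y => Φ ζ y) n (lineMap z' z v) (lineMap z' z u)
              (Φ (lineMap z' z u) x)) := by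
          rw [intervalIntegral.integral_smul, intervalIntegral.integral_smul,
            integral_integral_triangle_swap hf]
      _ = ∫ u in s..t, Vseq (fun ζ y => Φ ζ y) (n + 1) (lineMap z' z t) (lineMap z' z u)
            (Φ (lineMap z' z u) x) := by
          simp only [Vseq_succ_lineMap, intervalIntegral.integral_smul]

theorem Vseq_succ_eq_lineIntegral_right [CompleteSpace 𝓗] (hΦ : IsLevelRaising Φ S)
    (z z' : ℂ) (n : ℕ) {k : ℕ} {x : 𝓗} (hx : x ∈ S k) :
    Vseq (fun ζ y => Φ ζ y) (n + 1) z z' x =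
      (-Complex.I) • lineIntegral (fun ζ => Vseq (fun ζ y => Φ ζ y) n z ζ (Φ ζ x)) z' z := by
  have hswap := hΦ.integral_Vseq_lineMap_comm z' z hx n 0 1
  have hleft := Vseq_succ_lineMap (fun ζ y => Φ ζ y) z' z n 0 1 x
  have hright := lineIntegral_lineMap
    (fun ζ => Vseq (fun ζ y => Φ ζ y) n z ζ (Φ ζ x)) z' z 0 1
  simp only [lineMap_apply_zero, lineMap_apply_one] at hswap hleft hright
  rw [hleft, hswap, hright]

end IsLevelRaising

end Recursion

namespace FreeData

variable {𝓗 : Type*} [NormedAddCommGroup 𝓗] [InnerProductSpace ℂ 𝓗] [CompleteSpace 𝓗]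

theorem continuous_W (F : FreeData 𝓗) {E : ℝ} (hE : 0 ≤ E) :
    Continuous fun p : ℂ × F.V E => F.W p.1 p.2 := by
  rw [continuous_iff_continuousAt]
  rintro ⟨ζ₀, x₀⟩
  have hW : Continuous fun ζ => F.W ζ x₀ :=
    continuous_iff_continuousAt.2 fun ζ => (F.W_deriv E x₀ x₀.2 ζ).continuousAt
  have hsmall : Tendsto (fun p : ℂ × F.V E => F.W p.1 ((p.2 - x₀ : F.V E) : 𝓗))
      (𝓝 (ζ₀, x₀)) (𝓝 0) := by
    refine squeeze_zero_norm (fun p => F.W_norm p.1 E hE _ (p.2 - x₀).2) ?_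
    have : Continuous fun p : ℂ × F.V E => Real.exp (|p.1.im| * E) * ‖p.2 - x₀‖ := by
      fun_prop
    simpa using this.tendsto (ζ₀, x₀)
  show Tendsto _ _ _
  simpa using hsmall.add ((hW.comp continuous_fst).tendsto (ζ₀, x₀))

end FreeData

namespace C0

variable {𝓗 : Type*} [NormedAddCommGroup 𝓗] [InnerProductSpace ℂ 𝓗] [CompleteSpace 𝓗]
  {F : FreeData 𝓗}

theorem Az_mem (A : C0 F) {E : ℝ} (hE : 0 ≤ E) (ζ : ℂ) {x : 𝓗} (hx : x ∈ F.V E) :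
    A.Az ζ x ∈ F.V (E + A.b) :=
  F.W_mem _ _ _ (A.map_V E hE _ (F.W_mem _ _ _ hx))

theorem continuous_Az (A : C0 F) {E : ℝ} (hE : 0 ≤ E) :
    Continuous fun p : ℂ × F.V E => A.Az p.1 p.2 := by
  have hop : Continuous fun x : F.V E => A.op x :=
    AddMonoidHomClass.continuous_of_bound (A.op ∘ₗ (F.V E).subtype) _
      fun x => A.norm_bound E hE x x.2
  have hW : Continuous fun p : ℂ × F.V E => (⟨F.W (-p.1) p.2, F.W_mem _ _ _ p.2.2⟩ : F.V E) :=
    ((F.continuous_W hE).comp (continuous_neg.prodMap continuous_id)).subtype_mk _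
  exact (F.continuous_W (add_nonneg hE A.b_nonneg)).comp (continuous_fst.prodMk
    ((hop.comp hW).subtype_mk fun p => A.map_V E hE _ (F.W_mem _ _ _ p.2.2)))

theorem isLevelRaising_Az (A : C0 F) {E : ℝ} (hE : 0 ≤ E) :
    IsLevelRaising A.Az fun k : ℕ => F.V (E + k * A.b) where
  isClosed _ := F.V_closed _
  map_mem k ζ x hx := by
    have hk : 0 ≤ E + k * A.b := add_nonneg hE (mul_nonneg k.cast_nonneg A.b_nonneg)
    simpa [add_mul, add_assoc] using A.Az_mem hk ζ hx
  continuous k := A.continuous_Az (add_nonneg hE (mul_nonneg k.cast_nonneg A.b_nonneg))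

end C0

/-- Let `A` be of `C₀`-class and `z, z' ∈ ℂ`.  Then on `D_fin`, for every
`n ≥ 0`, the recursion formulas
`V_{n+1}(A;z,z') = (-i) ∫_{z'}^z dζ A(ζ) Vₙ(A;ζ,z')` and
`V_{n+1}(A;z,z') = (-i) ∫_{z'}^z dζ Vₙ(A;z,ζ) A(ζ)` hold, where the integrals are line
integrals of analytic vector-valued functions depending only on the endpoints. -/
theorem statement4 {𝓗 : Type*} [NormedAddCommGroup 𝓗] [InnerProductSpace ℂ 𝓗]
    [CompleteSpace 𝓗] (F : FreeData 𝓗) (A : C0 F) (z z' : ℂ) (n : ℕ)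
    (Ψ : 𝓗) (hΨ : Ψ ∈ F.Dfin) :
    A.Vn (n + 1) z z' Ψ =
      (-Complex.I) • lineIntegral (fun ζ => A.Az ζ (A.Vn n ζ z' Ψ)) z' z ∧
    A.Vn (n + 1) z z' Ψ =
      (-Complex.I) • lineIntegral (fun ζ => A.Vn n z ζ (A.Az ζ Ψ)) z' z := by
  obtain ⟨E, hE, hΨE⟩ := mem_iUnion₂.mp hΨ
  refine ⟨rfl, (A.isLevelRaising_Az hE).Vseq_succ_eq_lineIntegral_right z z' n (k := 0) ?_⟩
  simpa using hΨE
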